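/- arXiv:0909.4350 — 3 statements merged into one kernel-verified Lean document; each statement's English description precedes it below -/
import Mathlib

section
/- Assume (A1) and (A2). Then there exist δ₀ > 0, ε₀ > 0, a continuous map β : closure(V) × [0, ε₀] → ℝⁿ⁻ᵏ with β(α, 0) = β₀(α), and a bounded map μ : closure(V) × (0, ε₀] → ℝⁿ⁻ᵏ such that: (i) π⊥F(S(α, β(α,ε)), ε) = 0 for all α ∈ closure(V) and ε ∈ [0, ε₀]; (ii) β(α,ε) = β₀(α) + εμ(α,ε) for all α ∈ closure(V) and ε ∈ (0, ε₀]; (iii) for each α ∈ closure(V) and ε ∈ [0, ε₀], β(α,ε) is the unique b ∈ B_{δ₀}(β₀(α)) with π⊥F(S(α, b), ε) = 0. -/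
/-!
Write `S(α, b) = c α + J b` with `c α = S(α, 0)`, `J b = S(0, b)`, and let
`T_α = π⊥ ∘ DP(S(α, β₀ α)) ∘ J` be the invertible block of (A2). Zeros `b = β₀ α + d` of
`b ↦ π⊥ F(S(α, b), ε)` are the fixed points of the Newton-type map
`d ↦ d - T_α⁻¹ π⊥ F(S(α, β₀ α + d), ε)`. By compactness of `closure V`, `T_α⁻¹` is uniformly
bounded, `DP` is uniformly close to `DP(S(α, β₀ α))` on a fixed neighbourhood of `Z`, and `Q` is
uniformly Lipschitz there; so for small `δ` and `ε₀` this map is a `1/2`-contraction of the ball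
`‖d‖ ≤ δ`, and it moves `0` only by `O(ε)` because `P` vanishes on `Z`. The uniform contraction
principle gives a fixed point `d(α, ε)` that is continuous in `(α, ε)`, unique in the ball and of
size `O(ε)`; then `β = β₀ + d` and `μ = d / ε`.
-/

open scoped Topology

/-- Projection of `ℝⁿ` onto the first `k` coordinates. -/
def proj1 {n : ℕ} (k : ℕ) (hk : k ≤ n) (z : Fin n → ℝ) : Fin k → ℝ :=
  fun i => z (Fin.castLE hk i)

/-- Projection of `ℝⁿ` onto the last `n - k` coordinates. -/
def proj2 {n : ℕ} (k : ℕ) (_hk : k ≤ n) (z : Fin n → ℝ) : Fin (n - k) → ℝ :=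
  fun i => z ⟨k + (i : ℕ), by have := i.isLt; omega⟩

/-- The vector of `ℝⁿ` with first `k` coordinates `a` and last `n - k` coordinates `b`. -/
def embed {n : ℕ} (k : ℕ) (_hk : k ≤ n) (a : Fin k → ℝ) (b : Fin (n - k) → ℝ) :
    Fin n → ℝ :=
  fun i => if h : (i : ℕ) < k then a ⟨(i : ℕ), h⟩
    else b ⟨(i : ℕ) - k, by have := i.isLt; omega⟩

open Set Metric Filter Function
open scoped NNReal

section FixedPoint

variable {α : Type*} [MetricSpace α] {K : ℝ≥0} {f : α → α} {s : Set α}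

theorem LipschitzOnWith.dist_le_of_isFixedPt (hf : LipschitzOnWith K f s) (hK : K < 1)
    {x y : α} (hx : x ∈ s) (hy : y ∈ s) (hfy : IsFixedPt f y) :
    dist x y ≤ dist x (f x) / (1 - K) := by
  have hK' : (0 : ℝ) < 1 - K := sub_pos.2 (mod_cast hK)
  rw [le_div_iff₀ hK']
  have hxy := hf.dist_le_mul x hx y hy
  have := dist_triangle x (f x) y
  rw [hfy.eq] at hxy
  nlinarith

theorem LipschitzOnWith.eq_of_isFixedPt (hf : LipschitzOnWith K f s) (hK : K < 1)
    {x y : α} (hx : x ∈ s) (hy : y ∈ s) (hfx : IsFixedPt f x) (hfy : IsFixedPt f y) :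
    x = y := by
  simpa [hfx.eq] using hf.dist_le_of_isFixedPt hK hx hy hfy

theorem LipschitzOnWith.mapsTo_closedBall {x : α} {r : ℝ}
    (hf : LipschitzOnWith K f (closedBall x r)) (hfx : dist (f x) x ≤ (1 - K) * r) : MapsTo f (closedBall x r) (closedBall x r) := by
  intro y hy
  have := hf.dist_le_mul y hy x (mem_closedBall_self (dist_nonneg.trans hy))
  have := dist_triangle (f y) (f x) x
  rw [mem_closedBall] at hy ⊢
  nlinarith [K.coe_nonneg]

theorem LipschitzOnWith.exists_isFixedPt [CompleteSpace α] (hf : LipschitzOnWith K f s)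
    (hK : K < 1) (hs : IsClosed s) (hfs : MapsTo f s s) (hne : s.Nonempty) :
    ∃ y ∈ s, IsFixedPt f y :=
  let ⟨_, hx⟩ := hne
  let ⟨y, hy, hfy, _⟩ := ContractingWith.exists_fixedPoint' hs.isComplete hfs
    ⟨hK, hf.mapsToRestrict hfs⟩ hx (edist_ne_top _ _)
  ⟨y, hy, hfy⟩

theorem exists_continuousOn_isFixedPt [CompleteSpace α] {X : Type*} [TopologicalSpace X]
    {S : Set X} {Φ : X → α → α} (hK : K < 1) (hs : IsClosed s) (hne : s.Nonempty)
    (hlip : ∀ p ∈ S, LipschitzOnWith K (Φ p) s) (hmaps : ∀ p ∈ S, MapsTo (Φ p) s s)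
    (hcont : ∀ x ∈ s, ContinuousOn (Φ · x) S) :
    ∃ y : X → α, ContinuousOn y S ∧ ∀ p ∈ S, y p ∈ s ∧ IsFixedPt (Φ p) (y p) := by
  have : ∀ p, ∃ x, p ∈ S → x ∈ s ∧ IsFixedPt (Φ p) x := fun p => by
    by_cases hp : p ∈ S
    · obtain ⟨x, hx, hfx⟩ := (hlip p hp).exists_isFixedPt hK hs (hmaps p hp) hne
      exact ⟨x, fun _ => ⟨hx, hfx⟩⟩
    · exact ⟨hne.some, fun h => absurd h hp⟩
  choose y hy using this
  refine ⟨y, fun p₀ hp₀ => ?_, hy⟩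
  obtain ⟨hy₀, hfy₀⟩ := hy p₀ hp₀
  have hlim : Tendsto (fun p => dist (y p₀) (Φ p (y p₀)) / (1 - K)) (𝓝[S] p₀) (𝓝 0) := by
    simpa [hfy₀.eq] using
      ((tendsto_const_nhds (x := y p₀)).dist (hcont _ hy₀ p₀ hp₀)).div_const (1 - (K : ℝ))
  rw [ContinuousWithinAt, tendsto_iff_dist_tendsto_zero]
  refine squeeze_zero' (Eventually.of_forall fun _ => dist_nonneg) ?_ hlim
  filter_upwards [self_mem_nhdsWithin] with p hp
  rw [dist_comm]
  exact (hlip p hp).dist_le_of_isFixedPt hK hy₀ (hy p hp).1 (hy p hp).2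

end FixedPoint

theorem exists_continuousOn_zero_of_contraction {X E : Type*} [TopologicalSpace X]
    [NormedAddCommGroup E] [NormedSpace ℝ E] [CompleteSpace E] {A : Set X} {β₀ : X → E}
    (hβ₀ : ContinuousOn β₀ A) {G : X → E → ℝ → E} {Φ : X → ℝ → E → E} {δ ε₀ C : ℝ}
    (hδ : 0 < δ) (hε₀ : 0 ≤ ε₀) (hC : 0 ≤ C) (hε₀C : ε₀ * C ≤ δ / 2)
    (hfix : ∀ α ∈ A, ∀ e ∈ Icc 0 ε₀, ∀ d, IsFixedPt (Φ α e) d ↔ G α (β₀ α + d) e = 0)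
    (hlip : ∀ α ∈ A, ∀ e ∈ Icc 0 ε₀, LipschitzOnWith (1 / 2) (Φ α e) (closedBall 0 δ))
    (hsmall : ∀ α ∈ A, ∀ e ∈ Icc 0 ε₀, ‖Φ α e 0‖ ≤ e * C)
    (hcont : ∀ d, ContinuousOn (fun p : X × ℝ => Φ p.1 p.2 d) (A ×ˢ Icc 0 ε₀)) :
    ∃ β μ : X → ℝ → E,
      ContinuousOn (fun p : X × ℝ => β p.1 p.2) (A ×ˢ Icc 0 ε₀) ∧
      (∀ α ∈ A, β α 0 = β₀ α) ∧
      (∃ C : ℝ, ∀ α ∈ A, ∀ e ∈ Ioc (0 : ℝ) ε₀, ‖μ α e‖ ≤ C) ∧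
      (∀ α ∈ A, ∀ e ∈ Icc (0 : ℝ) ε₀, G α (β α e) e = 0) ∧
      (∀ α ∈ A, ∀ e ∈ Ioc (0 : ℝ) ε₀, β α e = β₀ α + e • μ α e) ∧
      (∀ α ∈ A, ∀ e ∈ Icc (0 : ℝ) ε₀, ∀ b ∈ ball (β₀ α) δ, G α b e = 0 → b = β α e) := by
  have hK : (1 / 2 : ℝ≥0) < 1 := by norm_num
  have hmaps : ∀ α ∈ A, ∀ e ∈ Icc 0 ε₀, MapsTo (Φ α e) (closedBall 0 δ) (closedBall 0 δ) :=
    fun α hα e he => (hlip α hα e he).mapsTo_closedBall <| by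
      rw [dist_zero_right]
      norm_num
      nlinarith [hsmall α hα e he, he.1, he.2]
  obtain ⟨f, hfc, hf⟩ := exists_continuousOn_isFixedPt (Φ := fun p : X × ℝ => Φ p.1 p.2) hK
    isClosed_closedBall (nonempty_closedBall.2 hδ.le) (fun p hp => hlip _ hp.1 _ hp.2)
    (fun p hp => hmaps _ hp.1 _ hp.2) (fun d _ => hcont d)
  have hnorm : ∀ α ∈ A, ∀ e ∈ Icc 0 ε₀, ‖f (α, e)‖ ≤ 2 * (e * C) := fun α hα e he => by
    have := (hlip α hα e he).dist_le_of_isFixedPt hK (mem_closedBall_self hδ.le)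
      (hf (α, e) ⟨hα, he⟩).1 (hf (α, e) ⟨hα, he⟩).2
    norm_num [dist_zero_left] at this
    linarith [hsmall α hα e he]
  refine ⟨fun α e => β₀ α + f (α, e), fun α e => e⁻¹ • f (α, e),
    (hβ₀.comp continuousOn_fst fun p hp => hp.1).add hfc, fun α hα => ?_,
    ⟨2 * C, fun α hα e he => ?_⟩, fun α hα e he => (hfix α hα e he _).1 (hf (α, e) ⟨hα, he⟩).2,
    fun α hα e he => by simp [smul_inv_smul₀ he.1.ne'], fun α hα e he b hb hGb => ?_⟩
  · simpa using hnorm α hα 0 (left_mem_Icc.2 hε₀)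
  · rw [norm_smul, norm_inv, Real.norm_of_nonneg he.1.le, inv_mul_le_iff₀ he.1]
    linarith [hnorm α hα e (Ioc_subset_Icc_self he)]
  · have hd : b - β₀ α ∈ closedBall 0 δ := by
      rw [mem_closedBall_zero_iff, ← dist_eq_norm]; exact (mem_ball.1 hb).le
    have := (hlip α hα e he).eq_of_isFixedPt hK hd (hf (α, e) ⟨hα, he⟩).1
      ((hfix α hα e he _).2 (by rwa [add_sub_cancel])) (hf (α, e) ⟨hα, he⟩).2
    simp [← this]

section Newton

variable {E F : Type*} [NormedAddCommGroup E] [NormedSpace ℝ E]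
  [NormedAddCommGroup F] [NormedSpace ℝ F]

def newtonMap (M : F →L[ℝ] E) (G : E → F) (x : E) : E := x - M (G x)

theorem isFixedPt_newtonMap_iff {M : F →L[ℝ] E} (hM : Injective M) {G : E → F} {x : E} :
    IsFixedPt (newtonMap M G) x ↔ G x = 0 := by
  rw [IsFixedPt, newtonMap, sub_eq_self, ← map_zero M, hM.eq_iff]

theorem lipschitzOnWith_newtonMap {M : F →L[ℝ] E} {T : E →L[ℝ] F}
    (hMT : M ∘L T = ContinuousLinearMap.id ℝ E) {g h : E → F} {g' : E → E →L[ℝ] F} {s : Set E}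
    {η L : ℝ≥0} (hs : Convex ℝ s) (hg : ∀ x ∈ s, HasFDerivWithinAt g (g' x) s x)
    (hg' : ∀ x ∈ s, ‖g' x - T‖₊ ≤ η) (hh : LipschitzOnWith L h s) :
    LipschitzOnWith (‖M‖₊ * (η + L)) (newtonMap M (g + h)) s := by
  have hsplit : newtonMap M (g + h) = fun x => -M (g x - T x + h x) := by
    ext1 x
    have hx : M (T x) = x := congrArg (· x) hMT
    simp only [newtonMap, Pi.add_apply, map_add, map_sub, hx]
    abel
  have hgT : LipschitzOnWith η (fun x => g x - T x) s :=
    hs.lipschitzOnWith_of_nnnorm_hasFDerivWithin_le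
      (fun x hx => (hg x hx).sub T.hasFDerivWithinAt) hg'
  rw [hsplit]
  exact (M.lipschitz.comp_lipschitzOnWith (hgT.add hh)).neg

end Newton

theorem ContinuousOn.ring_inverse {X R : Type*} [TopologicalSpace X] [NormedRing R]
    [CompleteSpace R] {T : X → R} {A : Set X} (hT : ContinuousOn T A)
    (hunit : ∀ α ∈ A, IsUnit (T α)) : ContinuousOn (fun α => Ring.inverse (T α)) A :=
  fun α hα => by
    obtain ⟨u, hu⟩ := hunit α hα
    exact (hu ▸ NormedRing.inverse_continuousAt u).comp_continuousWithinAt (hT α hα)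

theorem IsCompact.exists_forall_dist_lt_of_continuousAt {β γ : Type*} [PseudoMetricSpace β]
    [PseudoMetricSpace γ] {K : Set β} (hK : IsCompact K) {f : β → γ}
    (hf : ∀ x ∈ K, ContinuousAt f x) {ε : ℝ} (hε : 0 < ε) :
    ∃ δ > 0, ∀ x ∈ K, ∀ y, dist x y < δ → dist (f x) (f y) < ε := by
  obtain ⟨δ, hδ, h⟩ := Metric.mem_uniformity_dist.1
    (hK.uniformContinuousAt_of_continuousAt f hf (dist_mem_uniformity hε))
  exact ⟨δ, hδ, fun x hx y hxy => h hxy hx⟩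

theorem ContinuousLinearMap.norm_apply_lt_of_mem_closedBall {E F : Type*}
    [NormedAddCommGroup E] [NormedSpace ℝ E] [NormedAddCommGroup F] [NormedSpace ℝ F]
    (J : E →L[ℝ] F) {r : ℝ} (hr : 0 < r) {x : E} (hx : x ∈ closedBall 0 (r / (‖J‖ + 1))) :
    ‖J x‖ < r :=
  calc ‖J x‖ ≤ ‖J‖ * (r / (‖J‖ + 1)) := J.le_opNorm_of_le (mem_closedBall_zero_iff.1 hx)
    _ < (‖J‖ + 1) * (r / (‖J‖ + 1)) := by gcongr; linarith
    _ = r := mul_div_cancel₀ _ (by positivity)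

theorem exists_lipschitzOnWith_and_bound_cthickening {W : Type*} [NormedAddCommGroup W]
    [ProperSpace W] {Q : W → ℝ → W}
    (hQcont : ContinuousOn (fun p : W × ℝ => Q p.1 p.2) (univ ×ˢ Icc 0 1))
    (hQlip : ∀ K : Set (W × ℝ), IsCompact K → K ⊆ univ ×ˢ Icc 0 1 →
      ∃ L > 0, ∀ z₁ z₂ : W, ∀ e : ℝ, (z₁, e) ∈ K → (z₂, e) ∈ K →
        ‖Q z₁ e - Q z₂ e‖ ≤ L * ‖z₁ - z₂‖)
    {K : Set W} (hK : IsCompact K) :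
    ∃ (L : ℝ≥0) (C : ℝ), 0 < C ∧ ∀ e ∈ Icc (0 : ℝ) 1,
      LipschitzOnWith L (Q · e) (cthickening 1 K) ∧ ∀ z ∈ cthickening 1 K, ‖Q z e‖ ≤ C := by
  have hK' : IsCompact (cthickening 1 K ×ˢ Icc (0 : ℝ) 1) := hK.cthickening.prod isCompact_Icc
  have hsub : cthickening 1 K ×ˢ Icc (0 : ℝ) 1 ⊆ univ ×ˢ Icc 0 1 :=
    prod_mono (subset_univ _) le_rfl
  obtain ⟨L, -, hL⟩ := hQlip _ hK' hsub
  obtain ⟨C, hC0, hC⟩ :=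
    (hK'.image_of_continuousOn (hQcont.mono hsub)).isBounded.exists_pos_norm_le
  refine ⟨L.toNNReal, C, hC0, fun e he => ⟨LipschitzOnWith.of_dist_le' fun z₁ h₁ z₂ h₂ => ?_,
    fun z hz => hC _ (mem_image_of_mem (fun p : W × ℝ => Q p.1 p.2) (mk_mem_prod hz he))⟩⟩
  simpa only [dist_eq_norm] using hL z₁ z₂ e ⟨h₁, he⟩ ⟨h₂, he⟩

section Reduction

variable {X W E : Type*}
  [NormedAddCommGroup W] [NormedSpace ℝ W] [NormedAddCommGroup E] [NormedSpace ℝ E]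
  (P : W → W) (Q : W → ℝ → W) (c : X → W) (J : E →L[ℝ] W) (π : W →L[ℝ] E) (β₀ : X → E)

def reducedMap (α : X) (b : E) (e : ℝ) : E := π (P (c α + J b) + e • Q (c α + J b) e)

noncomputable def reducedDeriv (z : W) : E →L[ℝ] E := π ∘L fderiv ℝ P z ∘L J

noncomputable def reducedNewtonMap (α : X) (e : ℝ) : E → E :=
  newtonMap (Ring.inverse (reducedDeriv P J π (c α + J (β₀ α))))
    (fun d => reducedMap P Q c J π α (β₀ α + d) e)

variable {P Q c J π β₀}

theorem continuous_reducedDeriv (hP : ContDiff ℝ 1 P) : Continuous (reducedDeriv P J π) :=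
  continuous_const.clm_comp ((hP.continuous_fderiv one_ne_zero).clm_comp continuous_const)

theorem continuousOn_inverse_reducedDeriv [TopologicalSpace X] [CompleteSpace E] {A : Set X}
    (hP : ContDiff ℝ 1 P) (hc : ContinuousOn c A) (hβ₀ : ContinuousOn β₀ A)
    (hunit : ∀ α ∈ A, IsUnit (reducedDeriv P J π (c α + J (β₀ α)))) :
    ContinuousOn (fun α => Ring.inverse (reducedDeriv P J π (c α + J (β₀ α)))) A :=
  ((continuous_reducedDeriv hP).comp_continuousOn
    (hc.add (J.continuous.comp_continuousOn hβ₀))).ring_inverse hunit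

theorem isFixedPt_reducedNewtonMap_iff {α : X}
    (hunit : IsUnit (reducedDeriv P J π (c α + J (β₀ α)))) {e : ℝ} {d : E} :
    IsFixedPt (reducedNewtonMap P Q c J π β₀ α e) d ↔
      reducedMap P Q c J π α (β₀ α + d) e = 0 := by
  refine isFixedPt_newtonMap_iff
    (LeftInverse.injective (g := reducedDeriv P J π (c α + J (β₀ α))) fun x => ?_)
  exact congrArg (fun A : E →L[ℝ] E => A x) (Ring.mul_inverse_cancel _ hunit)

theorem lipschitzOnWith_reducedNewtonMap (hP : ContDiff ℝ 1 P) {α : X}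
    (hunit : IsUnit (reducedDeriv P J π (c α + J (β₀ α)))) {e δ : ℝ} {η L : ℝ≥0}
    (hD : ∀ d ∈ closedBall (0 : E) δ,
      ‖reducedDeriv P J π (c α + J (β₀ α + d)) - reducedDeriv P J π (c α + J (β₀ α))‖₊ ≤ η)
    (hQ : LipschitzOnWith L (fun d => π (Q (c α + J (β₀ α + d)) e)) (closedBall 0 δ)) :
    LipschitzOnWith (‖Ring.inverse (reducedDeriv P J π (c α + J (β₀ α)))‖₊ * (η + ‖e‖₊ * L))
      (reducedNewtonMap P Q c J π β₀ α e) (closedBall 0 δ) := by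
  have hsplit : (fun d => reducedMap P Q c J π α (β₀ α + d) e) =
      (fun d => π (P (c α + J (β₀ α + d)))) + (fun d => e • π (Q (c α + J (β₀ α + d)) e)) := by
    ext1 d; simp [reducedMap]
  rw [reducedNewtonMap, hsplit]
  refine lipschitzOnWith_newtonMap (Ring.inverse_mul_cancel _ hunit) (convex_closedBall 0 δ)
    (fun d _ => ?_) hD ((lipschitzWith_smul e).comp_lipschitzOnWith hQ)
  have hJ : HasFDerivAt (fun d => c α + J (β₀ α + d)) J d := by
    simpa using ((J.hasFDerivAt (x := β₀ α + d)).comp d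
      ((hasFDerivAt_id d).const_add (β₀ α))).const_add (c α)
  exact (π.hasFDerivAt.comp d
    ((hP.differentiable one_ne_zero _).hasFDerivAt.comp d hJ)).hasFDerivWithinAt

theorem norm_reducedNewtonMap_zero_le {α : X} (hPβ₀ : P (c α + J (β₀ α)) = 0) {e : ℝ}
    (he : 0 ≤ e) :
    ‖reducedNewtonMap P Q c J π β₀ α e 0‖ ≤
      ‖Ring.inverse (reducedDeriv P J π (c α + J (β₀ α)))‖ * (e * ‖π (Q (c α + J (β₀ α)) e)‖) := by
  simp only [reducedNewtonMap, newtonMap, reducedMap, add_zero, hPβ₀, zero_add, zero_sub,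
    norm_neg, map_smul, ← norm_smul_of_nonneg he]
  rw [← map_smul]
  exact (Ring.inverse (reducedDeriv P J π (c α + J (β₀ α)))).le_opNorm _

theorem continuousOn_reducedNewtonMap [TopologicalSpace X] [CompleteSpace E] {A : Set X}
    (hP : ContDiff ℝ 1 P) (hQcont : ContinuousOn (fun p : W × ℝ => Q p.1 p.2) (univ ×ˢ Icc 0 1))
    (hc : ContinuousOn c A) (hβ₀ : ContinuousOn β₀ A)
    (hunit : ∀ α ∈ A, IsUnit (reducedDeriv P J π (c α + J (β₀ α)))) {ε₀ : ℝ} (hε₀ : ε₀ ≤ 1)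
    (d : E) :
    ContinuousOn (fun p : X × ℝ => reducedNewtonMap P Q c J π β₀ p.1 p.2 d) (A ×ˢ Icc 0 ε₀) := by
  have hfst : MapsTo Prod.fst (A ×ˢ Icc 0 ε₀) A := fun p hp => hp.1
  have hz : ContinuousOn (fun p : X × ℝ => c p.1 + J (β₀ p.1 + d)) (A ×ˢ Icc 0 ε₀) :=
    (hc.comp continuousOn_fst hfst).add (J.continuous.comp_continuousOn
      ((hβ₀.comp continuousOn_fst hfst).add continuousOn_const))
  have hQ : ContinuousOn (fun p : X × ℝ => Q (c p.1 + J (β₀ p.1 + d)) p.2) (A ×ˢ Icc 0 ε₀) :=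
    hQcont.comp (hz.prodMk continuousOn_snd) fun p hp => ⟨mem_univ _, hp.2.1, hp.2.2.trans hε₀⟩
  exact continuousOn_const.sub
    (((continuousOn_inverse_reducedDeriv hP hc hβ₀ hunit).comp continuousOn_fst hfst).clm_apply
      (π.continuous.comp_continuousOn
        ((hP.continuous.comp_continuousOn hz).add (continuousOn_snd.smul hQ))))

theorem exists_forall_nnnorm_reducedDeriv_sub_le [TopologicalSpace X] {A : Set X}
    (hA : IsCompact A) (hP : ContDiff ℝ 1 P) (hc : ContinuousOn c A) (hβ₀ : ContinuousOn β₀ A)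
    {η : ℝ≥0} (hη : 0 < η) :
    ∃ δ > 0, ∀ α ∈ A, ∀ d ∈ closedBall (0 : E) δ,
      ‖reducedDeriv P J π (c α + J (β₀ α + d)) - reducedDeriv P J π (c α + J (β₀ α))‖₊ ≤ η := by
  obtain ⟨δ, hδ, h⟩ := (hA.image_of_continuousOn
    (hc.add (J.continuous.comp_continuousOn hβ₀))).exists_forall_dist_lt_of_continuousAt
      (fun z _ => (continuous_reducedDeriv (J := J) (π := π) hP).continuousAt)
      (NNReal.coe_pos.2 hη)
  refine ⟨δ / (‖J‖ + 1), by positivity, fun α hα d hd => ?_⟩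
  rw [← NNReal.coe_le_coe, coe_nnnorm, ← dist_eq_norm, dist_comm]
  refine (h (c α + J (β₀ α)) (mem_image_of_mem _ hα) _ ?_).le
  rw [map_add, ← add_assoc, dist_self_add_right]
  exact J.norm_apply_lt_of_mem_closedBall hδ hd

theorem exists_lipschitzOnWith_perturbation [TopologicalSpace X] [ProperSpace W] {A : Set X}
    (hA : IsCompact A) (hc : ContinuousOn c A) (hβ₀ : ContinuousOn β₀ A)
    (hQcont : ContinuousOn (fun p : W × ℝ => Q p.1 p.2) (univ ×ˢ Icc 0 1))
    (hQlip : ∀ K : Set (W × ℝ), IsCompact K → K ⊆ univ ×ˢ Icc 0 1 →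
      ∃ L > 0, ∀ z₁ z₂ : W, ∀ e : ℝ, (z₁, e) ∈ K → (z₂, e) ∈ K →
        ‖Q z₁ e - Q z₂ e‖ ≤ L * ‖z₁ - z₂‖) :
    ∃ δ > 0, ∃ (L : ℝ≥0) (C : ℝ), 0 ≤ C ∧ ∀ α ∈ A, ∀ e ∈ Icc (0 : ℝ) 1,
      LipschitzOnWith L (fun d => π (Q (c α + J (β₀ α + d)) e)) (closedBall 0 δ) ∧
      ‖π (Q (c α + J (β₀ α)) e)‖ ≤ C := by
  set z₀ : X → W := fun α => c α + J (β₀ α)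
  obtain ⟨L, C, hC, hQ⟩ := exists_lipschitzOnWith_and_bound_cthickening hQcont hQlip
    (hA.image_of_continuousOn (hc.add (J.continuous.comp_continuousOn hβ₀)))
  refine ⟨1 / (‖J‖ + 1), by positivity, ‖π‖₊ * (L * ‖J‖₊), ‖π‖ * C, by positivity,
    fun α hα e he => ⟨?_, π.le_opNorm_of_le ((hQ e he).2 _
      (self_subset_cthickening _ (mem_image_of_mem z₀ hα)))⟩⟩
  have hmaps : MapsTo (fun d => c α + J (β₀ α + d)) (closedBall 0 (1 / (‖J‖ + 1)))
      (cthickening 1 (z₀ '' A)) := fun d hd => by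
    show c α + J (β₀ α + d) ∈ _
    refine mem_cthickening_of_dist_le _ (z₀ α) _ _ (mem_image_of_mem _ hα) ?_
    rw [map_add, ← add_assoc, dist_comm, dist_self_add_right]
    exact (J.norm_apply_lt_of_mem_closedBall one_pos hd).le
  have hJ : LipschitzWith ‖J‖₊ (fun d => c α + J (β₀ α + d)) :=
    LipschitzWith.of_dist_le_mul fun d₁ d₂ => by
      simpa [dist_eq_norm, ← map_sub] using J.le_opNorm (d₁ - d₂)
  exact π.lipschitz.comp_lipschitzOnWith ((hQ e he).1.comp hJ.lipschitzOnWith hmaps)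

theorem exists_reducedNewtonMap_estimates [TopologicalSpace X] [ProperSpace W] [CompleteSpace E]
    {A : Set X} (hA : IsCompact A) (hP : ContDiff ℝ 1 P)
    (hQcont : ContinuousOn (fun p : W × ℝ => Q p.1 p.2) (univ ×ˢ Icc 0 1))
    (hQlip : ∀ K : Set (W × ℝ), IsCompact K → K ⊆ univ ×ˢ Icc 0 1 →
      ∃ L > 0, ∀ z₁ z₂ : W, ∀ e : ℝ, (z₁, e) ∈ K → (z₂, e) ∈ K →
        ‖Q z₁ e - Q z₂ e‖ ≤ L * ‖z₁ - z₂‖)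
    (hc : ContinuousOn c A) (hβ₀ : ContinuousOn β₀ A) (hPβ₀ : ∀ α ∈ A, P (c α + J (β₀ α)) = 0)
    (hunit : ∀ α ∈ A, IsUnit (reducedDeriv P J π (c α + J (β₀ α)))) :
    ∃ δ > 0, ∃ ε₀ > 0, ∃ C ≥ 0, ε₀ ≤ 1 ∧ ε₀ * C ≤ δ / 2 ∧ ∀ α ∈ A, ∀ e ∈ Icc 0 ε₀,
      LipschitzOnWith (1 / 2) (reducedNewtonMap P Q c J π β₀ α e) (closedBall 0 δ) ∧
      ‖reducedNewtonMap P Q c J π β₀ α e 0‖ ≤ e * C := by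
  obtain ⟨CM, hCM, hM⟩ := (hA.image_of_continuousOn
    (continuousOn_inverse_reducedDeriv hP hc hβ₀ hunit)).isBounded.exists_pos_norm_le
  lift CM to ℝ≥0 using hCM.le
  obtain ⟨δ₁, hδ₁, hD⟩ :=
    exists_forall_nnnorm_reducedDeriv_sub_le (J := J) (π := π) hA hP hc hβ₀ (η := (4 * CM)⁻¹)
      (inv_pos.2 (mul_pos four_pos (mod_cast hCM)))
  obtain ⟨δ₂, hδ₂, L, CQ, hCQ, hQ⟩ := exists_lipschitzOnWith_perturbation hA hc hβ₀ hQcont hQlip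
  set δ := min δ₁ δ₂
  set C := CM * CQ
  set ε₀ : ℝ := min 1 (min (1 / (4 * (CM * L + 1))) (δ / (2 * (C + 1))))
  have hε₀ : 0 < ε₀ := by positivity
  refine ⟨δ, lt_min hδ₁ hδ₂, ε₀, hε₀, C, by positivity, min_le_left _ _, ?_,
    fun α hα e he => ⟨?_, ?_⟩⟩
  · have h : ε₀ ≤ δ / (2 * (C + 1)) := (min_le_right _ _).trans (min_le_right _ _)
    rw [le_div_iff₀ (by positivity)] at h
    nlinarith
  · have he1 : e ∈ Icc (0 : ℝ) 1 := ⟨he.1, he.2.trans (min_le_left _ _)⟩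
    refine (lipschitzOnWith_reducedNewtonMap hP (hunit α hα)
      (fun d hd => hD α hα d (closedBall_subset_closedBall (min_le_left _ _) hd))
      ((hQ α hα e he1).1.mono (closedBall_subset_closedBall (min_le_right _ _)))).weaken ?_
    have he' : e * (4 * (CM * L + 1)) ≤ 1 := by
      have h : e ≤ 1 / (4 * (CM * L + 1)) := he.2.trans ((min_le_right _ _).trans (min_le_left _ _))
      rwa [le_div_iff₀ (by positivity)] at h
    have hMα : ‖Ring.inverse (reducedDeriv P J π (c α + J (β₀ α)))‖ ≤ CM :=
      hM _ (mem_image_of_mem _ hα)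
    have h₁ : ‖Ring.inverse (reducedDeriv P J π (c α + J (β₀ α)))‖ * (4 * (CM : ℝ))⁻¹ ≤ 1 / 4 := by
      rw [← div_eq_mul_inv, div_le_iff₀ (by positivity)]
      linarith
    have h₂ := mul_le_mul_of_nonneg_right hMα (mul_nonneg he.1 L.coe_nonneg)
    rw [← NNReal.coe_le_coe]
    push_cast
    rw [Real.norm_of_nonneg he.1, mul_add]
    linarith [mul_nonneg he.1 zero_le_four]
  · calc _ ≤ _ := norm_reducedNewtonMap_zero_le (hPβ₀ α hα) he.1
      _ ≤ CM * (e * CQ) := mul_le_mul (hM _ (mem_image_of_mem _ hα))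
        (mul_le_mul_of_nonneg_left (hQ α hα e ⟨he.1, he.2.trans (min_le_left _ _)⟩).2 he.1)
        (mul_nonneg he.1 (norm_nonneg _)) CM.coe_nonneg
      _ = e * C := by ring

theorem exists_continuousOn_reducedMap_eq_zero [TopologicalSpace X] [ProperSpace W]
    [CompleteSpace E] {A : Set X} (hA : IsCompact A) (hP : ContDiff ℝ 1 P)
    (hQcont : ContinuousOn (fun p : W × ℝ => Q p.1 p.2) (univ ×ˢ Icc 0 1))
    (hQlip : ∀ K : Set (W × ℝ), IsCompact K → K ⊆ univ ×ˢ Icc 0 1 →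
      ∃ L > 0, ∀ z₁ z₂ : W, ∀ e : ℝ, (z₁, e) ∈ K → (z₂, e) ∈ K →
        ‖Q z₁ e - Q z₂ e‖ ≤ L * ‖z₁ - z₂‖)
    (hc : ContinuousOn c A) (hβ₀ : ContinuousOn β₀ A) (hPβ₀ : ∀ α ∈ A, P (c α + J (β₀ α)) = 0)
    (hunit : ∀ α ∈ A, IsUnit (reducedDeriv P J π (c α + J (β₀ α)))) :
    ∃ δ₀ > 0, ∃ ε₀ > 0, ∃ β μ : X → ℝ → E,
      ContinuousOn (fun p : X × ℝ => β p.1 p.2) (A ×ˢ Icc 0 ε₀) ∧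
      (∀ α ∈ A, β α 0 = β₀ α) ∧
      (∃ C : ℝ, ∀ α ∈ A, ∀ e ∈ Ioc (0 : ℝ) ε₀, ‖μ α e‖ ≤ C) ∧
      (∀ α ∈ A, ∀ e ∈ Icc (0 : ℝ) ε₀, reducedMap P Q c J π α (β α e) e = 0) ∧
      (∀ α ∈ A, ∀ e ∈ Ioc (0 : ℝ) ε₀, β α e = β₀ α + e • μ α e) ∧
      (∀ α ∈ A, ∀ e ∈ Icc (0 : ℝ) ε₀, ∀ b ∈ ball (β₀ α) δ₀,
        reducedMap P Q c J π α b e = 0 → b = β α e) := by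
  obtain ⟨δ, hδ, ε₀, hε₀, C, hC, hε₀1, hε₀C, hest⟩ :=
    exists_reducedNewtonMap_estimates hA hP hQcont hQlip hc hβ₀ hPβ₀ hunit
  exact ⟨δ, hδ, ε₀, hε₀, exists_continuousOn_zero_of_contraction hβ₀ hδ hε₀.le hC hε₀C
    (fun α hα _ _ _ => isFixedPt_reducedNewtonMap_iff (hunit α hα))
    (fun α hα e he => (hest α hα e he).1) (fun α hα e he => (hest α hα e he).2)
    (continuousOn_reducedNewtonMap hP hQcont hc hβ₀ hunit hε₀1)⟩

end Reduction

section Coordinates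

variable {n : ℕ} (k : ℕ) (hk : k ≤ n)

def embedLinearMap : ((Fin k → ℝ) × (Fin (n - k) → ℝ)) →ₗ[ℝ] (Fin n → ℝ) where
  toFun p := embed k hk p.1 p.2
  map_add' p q := by ext i; by_cases h : (i : ℕ) < k <;> simp [embed, h]
  map_smul' r p := by ext i; by_cases h : (i : ℕ) < k <;> simp [embed, h]

def proj2LinearMap : (Fin n → ℝ) →ₗ[ℝ] (Fin (n - k) → ℝ) where
  toFun := proj2 k hk
  map_add' _ _ := rfl
  map_smul' _ _ := rfl

end Coordinates

theorem stmt2_general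
    (n k : ℕ) (hkn : k ≤ n)
    (P : (Fin n → ℝ) → (Fin n → ℝ)) (hP : ContDiff ℝ 1 P)
    (Q : (Fin n → ℝ) → ℝ → (Fin n → ℝ))
    (hQcont : ContinuousOn (fun p : (Fin n → ℝ) × ℝ => Q p.1 p.2)
      (Set.univ ×ˢ Set.Icc 0 1))
    (hQlip : ∀ K : Set ((Fin n → ℝ) × ℝ), IsCompact K → K ⊆ Set.univ ×ˢ Set.Icc 0 1 →
      ∃ L > 0, ∀ z₁ z₂ : Fin n → ℝ, ∀ e : ℝ, (z₁, e) ∈ K → (z₂, e) ∈ K →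
        ‖Q z₁ e - Q z₂ e‖ ≤ L * ‖z₁ - z₂‖)
    (F : (Fin n → ℝ) → ℝ → (Fin n → ℝ))
    (hF : ∀ z e, F z e = P z + e • Q z e)
    -- (A1)
    (S : Matrix (Fin n) (Fin n) ℝ)
    (V : Set (Fin k → ℝ)) (cV : Fin k → ℝ) (rV : ℝ)
    (hV : V = Metric.ball cV rV)
    (β₀ : (Fin k → ℝ) → (Fin (n - k) → ℝ)) (hβ₀ : ContDiffOn ℝ 1 β₀ (closure V))
    (Z : Set (Fin n → ℝ))
    (hZ : Z = (fun α => S.mulVec (embed k hkn α (β₀ α))) '' closure V)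
    (hPZ : ∀ z ∈ Z, P z = 0)
    -- (A2)
    (hA2inv : ∀ z ∈ Z, Function.Bijective
      (fun b : Fin (n - k) → ℝ => proj2 k hkn (fderiv ℝ P z (S.mulVec (embed k hkn 0 b))))) :
    -- conclusion: the Lipschitz Lyapunov–Schmidt reduction
    ∃ δ₀ > 0, ∃ ε₀ > 0, ∃ β : (Fin k → ℝ) → ℝ → (Fin (n - k) → ℝ),
      ∃ μ : (Fin k → ℝ) → ℝ → (Fin (n - k) → ℝ),
      ContinuousOn (fun p : (Fin k → ℝ) × ℝ => β p.1 p.2)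
        (closure V ×ˢ Set.Icc 0 ε₀) ∧
      (∀ α ∈ closure V, β α 0 = β₀ α) ∧
      (∃ C : ℝ, ∀ α ∈ closure V, ∀ e ∈ Set.Ioc (0 : ℝ) ε₀, ‖μ α e‖ ≤ C) ∧
      -- (i)
      (∀ α ∈ closure V, ∀ e ∈ Set.Icc (0 : ℝ) ε₀,
        proj2 k hkn (F (S.mulVec (embed k hkn α (β α e))) e) = 0) ∧
      -- (ii)
      (∀ α ∈ closure V, ∀ e ∈ Set.Ioc (0 : ℝ) ε₀, β α e = β₀ α + e • μ α e) ∧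
      -- (iii)
      (∀ α ∈ closure V, ∀ e ∈ Set.Icc (0 : ℝ) ε₀,
        ∀ b ∈ Metric.ball (β₀ α) δ₀,
          proj2 k hkn (F (S.mulVec (embed k hkn α b)) e) = 0 → b = β α e) := by
  set L := LinearMap.toContinuousLinearMap (S.mulVecLin ∘ₗ embedLinearMap k hkn)
  set J := L ∘L ContinuousLinearMap.inr ℝ (Fin k → ℝ) (Fin (n - k) → ℝ)
  set π := LinearMap.toContinuousLinearMap (proj2LinearMap k hkn)
  have hsplit : ∀ α b, S.mulVec (embed k hkn α b) = L (α, 0) + J b := fun α b => by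
    show _ = L (α, 0) + L (0, b)
    rw [← map_add, Prod.mk_add_mk, add_zero, zero_add]; rfl
  have hA : IsCompact (closure V) := hV ▸ Metric.isBounded_ball.isCompact_closure
  have hZ' : ∀ α ∈ closure V, L (α, 0) + J (β₀ α) ∈ Z := fun α hα => hZ ▸ ⟨α, hα, hsplit α _⟩
  obtain ⟨δ₀, hδ₀, ε₀, hε₀, β, μ, hβ, hβ0, hμ, hi, hii, hiii⟩ :=
    exists_continuousOn_reducedMap_eq_zero (c := fun α => L (α, 0)) (J := J) (π := π) hA hP
      hQcont hQlip
      (L.continuous.comp (Continuous.prodMk_left 0)).continuousOn hβ₀.continuousOn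
      (fun α hα => hPZ _ (hZ' α hα))
      (fun α hα => ContinuousLinearMap.isUnit_iff_bijective.2 (hA2inv _ (hZ' α hα)))
  have hred : ∀ α b e, proj2 k hkn (F (S.mulVec (embed k hkn α b)) e) =
      reducedMap P Q (fun α => L (α, 0)) J π α b e := fun α b e => by
    rw [hF, hsplit]; rfl
  simp only [hred]
  exact ⟨δ₀, hδ₀, ε₀, hε₀, β, μ, hβ, hβ0, hμ, hi, hii, hiii⟩

theorem stmt2
    (n k : ℕ) (hn : 1 ≤ n) (hk1 : 1 ≤ k) (hkn : k ≤ n)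
    (P : (Fin n → ℝ) → (Fin n → ℝ)) (hP : ContDiff ℝ 1 P)
    (Q : (Fin n → ℝ) → ℝ → (Fin n → ℝ))
    (hQcont : ContinuousOn (fun p : (Fin n → ℝ) × ℝ => Q p.1 p.2)
      (Set.univ ×ˢ Set.Icc 0 1))
    (hQlip : ∀ K : Set ((Fin n → ℝ) × ℝ), IsCompact K → K ⊆ Set.univ ×ˢ Set.Icc 0 1 →
      ∃ L > 0, ∀ z₁ z₂ : Fin n → ℝ, ∀ e : ℝ, (z₁, e) ∈ K → (z₂, e) ∈ K →
        ‖Q z₁ e - Q z₂ e‖ ≤ L * ‖z₁ - z₂‖)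
    (F : (Fin n → ℝ) → ℝ → (Fin n → ℝ))
    (hF : ∀ z e, F z e = P z + e • Q z e)
    -- (A1)
    (S : Matrix (Fin n) (Fin n) ℝ) (hS : IsUnit S)
    (V : Set (Fin k → ℝ)) (cV : Fin k → ℝ) (rV : ℝ) (hrV : 0 < rV)
    (hV : V = Metric.ball cV rV)
    (β₀ : (Fin k → ℝ) → (Fin (n - k) → ℝ)) (hβ₀ : ContDiffOn ℝ 1 β₀ (closure V))
    (Z : Set (Fin n → ℝ))
    (hZ : Z = (fun α => S.mulVec (embed k hkn α (β₀ α))) '' closure V)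
    (hPZ : ∀ z ∈ Z, P z = 0)
    -- (A2)
    (hA2zero : ∀ z ∈ Z, ∀ b : Fin (n - k) → ℝ,
      proj1 k hkn (fderiv ℝ P z (S.mulVec (embed k hkn 0 b))) = 0)
    (hA2inv : ∀ z ∈ Z, Function.Bijective
      (fun b : Fin (n - k) → ℝ => proj2 k hkn (fderiv ℝ P z (S.mulVec (embed k hkn 0 b))))) :
    -- conclusion: the Lipschitz Lyapunov–Schmidt reduction
    ∃ δ₀ > 0, ∃ ε₀ > 0, ∃ β : (Fin k → ℝ) → ℝ → (Fin (n - k) → ℝ),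
      ∃ μ : (Fin k → ℝ) → ℝ → (Fin (n - k) → ℝ),
      ContinuousOn (fun p : (Fin k → ℝ) × ℝ => β p.1 p.2)
        (closure V ×ˢ Set.Icc 0 ε₀) ∧
      (∀ α ∈ closure V, β α 0 = β₀ α) ∧
      (∃ C : ℝ, ∀ α ∈ closure V, ∀ e ∈ Set.Ioc (0 : ℝ) ε₀, ‖μ α e‖ ≤ C) ∧
      -- (i)
      (∀ α ∈ closure V, ∀ e ∈ Set.Icc (0 : ℝ) ε₀,
        proj2 k hkn (F (S.mulVec (embed k hkn α (β α e))) e) = 0) ∧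
      -- (ii)
      (∀ α ∈ closure V, ∀ e ∈ Set.Ioc (0 : ℝ) ε₀, β α e = β₀ α + e • μ α e) ∧
      -- (iii)
      (∀ α ∈ closure V, ∀ e ∈ Set.Icc (0 : ℝ) ε₀,
        ∀ b ∈ Metric.ball (β₀ α) δ₀,
          proj2 k hkn (F (S.mulVec (embed k hkn α b)) e) = 0 → b = β α e) :=
  stmt2_general n k hkn P hP Q hQcont hQlip F hF S V cV rV hV β₀ hβ₀ Z hZ hPZ hA2inv
end

section
/- Assume (A10), and for h ∈ closure(U) let W(·,h) denote the matrix solution of Ẇ = D_xf(t, x(t,ξ(h),0))W with W(0) = I_n (the normalized fundamental matrix of the linearized system). Then for every h ∈ closure(U): W(T,h)Dξ(h) = Dξ(h); for every c ∈ ℝᵏ the map t ↦ W(t,h)Dξ(h)c is a T-periodic solution of the linearized system ẏ = D_xf(t, x(t,ξ(h),0))y; and the k functions t ↦ W(t,h)Dξ(h)e_i, i = 1,…,k (e_i the standard basis of ℝᵏ), are linearly independent T-periodic solutions of the linearized system. -/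
/-!
Every `ξ h'` is a fixed point of the period map `z ↦ x(T, z)`, whose derivative at `ξ h` is
`W(T, h)`: since `f` is `C²`, a Grönwall estimate (run inside a tube around `x(·, ξ h)` where `f`
has uniform bounds, the trajectory being kept in the tube by a continuity argument) shows that
the linearization error is quadratic in `‖ξ h' - ξ h‖`. So `h' ↦ (1 - W(T, h)) (ξ h' - ξ h)` is
`O(‖h' - h‖²)` on the closed ball, and its derivative `(1 - W(T, h)) Dξ(h)` vanishes.
Periodicity of `t ↦ W(t, h) Dξ(h) c` then follows from uniqueness for the `T`-periodic linear
system, and linear independence from evaluation at `t = 0`, where `W(0, h) = 1`.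
-/

open Set Filter Metric Real Asymptotics
open scoped Topology NNReal

theorem forall_le_of_bootstrap {d : ℝ → ℝ} {a b B ρ : ℝ} (hd : ContinuousOn d (Icc a b))
    (hB : B < ρ) (hstep : ∀ c ∈ Icc a b, (∀ s ∈ Ico a c, d s ≤ ρ) → d c ≤ B) :
    ∀ t ∈ Icc a b, d t ≤ B := by
  have hlt : ∀ s ∈ Icc a b, d s < ρ := by
    by_contra! hexit
    have hcpt : IsCompact (Icc a b ∩ d ⁻¹' Ici ρ) :=
      isCompact_Icc.of_isClosed_subset (hd.preimage_isClosed_of_isClosed isClosed_Icc isClosed_Ici)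
        inter_subset_left
    obtain ⟨τ, ⟨hτ, hρτ⟩, hfirst⟩ := hcpt.exists_isLeast hexit
    have hbefore : ∀ s ∈ Ico a τ, d s ≤ ρ := fun s hs => by
      by_contra! hs'
      exact (hfirst ⟨⟨hs.1, hs.2.le.trans hτ.2⟩, hs'.le⟩).not_gt hs.2
    linarith [hstep τ hτ hbefore, show ρ ≤ d τ from hρτ]
  exact fun t ht => hstep t ht fun s hs => (hlt s ⟨hs.1, hs.2.le.trans ht.2⟩).le

theorem gronwallBound_δ0 (K ε x : ℝ) :
    gronwallBound 0 K ε x = ε * gronwallBound 0 K 1 x := by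
  unfold gronwallBound
  split_ifs <;> ring

section

variable {E F : Type*} [NormedAddCommGroup E] [NormedSpace ℝ E] [NormedAddCommGroup F]
  [NormedSpace ℝ F]

theorem norm_image_sub_sub_fderiv_le_of_lipschitzOnWith {g : E → F} {g' : E → E →L[ℝ] F}
    {s : Set E} {L : ℝ≥0} (hs : Convex ℝ s) (hg : ∀ y ∈ s, HasFDerivWithinAt g (g' y) s y)
    (hg' : LipschitzOnWith L g' s)
    {y z : E} (hy : y ∈ s) (hz : z ∈ s) :
    ‖g y - g z - g' z (y - z)‖ ≤ L * ‖y - z‖ ^ 2 := by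
  have hseg : segment ℝ z y ⊆ s := hs.segment_subset hz hy
  have hbound : ∀ w ∈ segment ℝ z y, ‖g' w - g' z‖ ≤ L * ‖y - z‖ := fun w hw =>
    (hg'.norm_sub_le (hseg hw) hz).trans
      (mul_le_mul_of_nonneg_left (norm_sub_le_of_mem_segment hw) L.2)
  calc ‖g y - g z - g' z (y - z)‖ ≤ L * ‖y - z‖ * ‖y - z‖ :=
        (convex_segment z y).norm_image_sub_le_of_norm_hasFDerivWithin_le'
          (fun w hw => (hg w (hseg hw)).mono hseg) hbound
          (left_mem_segment ℝ z y) (right_mem_segment ℝ z y)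
    _ = L * ‖y - z‖ ^ 2 := by ring

theorem norm_sub_le_of_lipschitz_near_trajectory {f : ℝ → E → E} {φ ψ : ℝ → E} {T K ρ : ℝ}
    (hK : 0 ≤ K)
    (hlip : ∀ t ∈ Icc 0 T, ∀ y, ‖y - ψ t‖ ≤ ρ → ‖f t y - f t (ψ t)‖ ≤ K * ‖y - ψ t‖)
    (hφ : ∀ t, HasDerivAt φ (f t (φ t)) t) (hψ : ∀ t, HasDerivAt ψ (f t (ψ t)) t)
    (hsmall : ‖φ 0 - ψ 0‖ * exp (K * T) < ρ) :
    ∀ t ∈ Icc 0 T, ‖φ t - ψ t‖ ≤ ‖φ 0 - ψ 0‖ * exp (K * T) := by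
  have hd : ∀ t, HasDerivAt (fun s => φ s - ψ s) (f t (φ t) - f t (ψ t)) t := fun t =>
    (hφ t).sub (hψ t)
  have hcont : Continuous fun s => φ s - ψ s :=
    continuous_iff_continuousAt.2 fun t => (hd t).continuousAt
  refine forall_le_of_bootstrap hcont.norm.continuousOn hsmall fun b hb hnear => ?_
  have hgron := norm_le_gronwallBound_of_norm_deriv_right_le (ε := 0) hcont.continuousOn
    (fun t _ => (hd t).hasDerivWithinAt) le_rfl
    (fun t ht => by simpa using hlip t ⟨ht.1, ht.2.le.trans hb.2⟩ (φ t) (hnear t ht)) b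
    (right_mem_Icc.2 hb.1)
  rw [sub_zero, gronwallBound_ε0] at hgron
  exact hgron.trans (mul_le_mul_of_nonneg_left (exp_le_exp.2
    (mul_le_mul_of_nonneg_left hb.2 hK)) (norm_nonneg _))

theorem norm_sub_sub_le_gronwallBound_of_taylor_near {f : ℝ → E → E} {A : ℝ → E →L[ℝ] E}
    {φ ψ Y : ℝ → E} {T M L ρ : ℝ} (hM : 0 ≤ M) (hL : 0 ≤ L) (hT : 0 ≤ T)
    (hA : ∀ t ∈ Icc 0 T, ‖A t‖ ≤ M)
    (htaylor : ∀ t ∈ Icc 0 T, ∀ y, ‖y - ψ t‖ ≤ ρ →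
      ‖f t y - f t (ψ t) - A t (y - ψ t)‖ ≤ L * ‖y - ψ t‖ ^ 2)
    (hφ : ∀ t, HasDerivAt φ (f t (φ t)) t) (hψ : ∀ t, HasDerivAt ψ (f t (ψ t)) t)
    (hY : ∀ t, HasDerivAt Y (A t (Y t)) t) (hY0 : Y 0 = φ 0 - ψ 0)
    (hsmall : ‖φ 0 - ψ 0‖ * exp ((M + L * ρ) * T) < ρ) :
    ‖φ T - ψ T - Y T‖ ≤ gronwallBound 0 M (L * (‖φ 0 - ψ 0‖ * exp ((M + L * ρ) * T)) ^ 2) T := by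
  set B := ‖φ 0 - ψ 0‖ * exp ((M + L * ρ) * T)
  have hρ : 0 ≤ ρ := (by positivity : 0 ≤ B).trans hsmall.le
  have hlip : ∀ t ∈ Icc 0 T, ∀ y, ‖y - ψ t‖ ≤ ρ →
      ‖f t y - f t (ψ t)‖ ≤ (M + L * ρ) * ‖y - ψ t‖ := fun t ht y hy =>
    calc ‖f t y - f t (ψ t)‖ ≤ ‖A t (y - ψ t)‖ + ‖f t y - f t (ψ t) - A t (y - ψ t)‖ :=
          norm_le_insert' _ _
      _ ≤ M * ‖y - ψ t‖ + L * ‖y - ψ t‖ ^ 2 :=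
          add_le_add ((A t).le_of_opNorm_le (hA t ht) _) (htaylor t ht y hy)
      _ ≤ (M + L * ρ) * ‖y - ψ t‖ := by
          nlinarith [mul_nonneg (mul_nonneg hL (norm_nonneg (y - ψ t))) (sub_nonneg.2 hy)]
  have hnear := norm_sub_le_of_lipschitz_near_trajectory (by positivity) hlip hφ hψ hsmall
  have hu : ∀ t, HasDerivAt (fun s => φ s - ψ s - Y s)
      (f t (φ t) - f t (ψ t) - A t (Y t)) t := fun t => ((hφ t).sub (hψ t)).sub (hY t)
  have hbound : ∀ t ∈ Ico 0 T, ‖f t (φ t) - f t (ψ t) - A t (Y t)‖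
      ≤ M * ‖φ t - ψ t - Y t‖ + L * B ^ 2 := fun t ht => by
    have ht' : t ∈ Icc 0 T := Ico_subset_Icc_self ht
    have hsplit : f t (φ t) - f t (ψ t) - A t (Y t) = A t (φ t - ψ t - Y t)
        + (f t (φ t) - f t (ψ t) - A t (φ t - ψ t)) := by
      simp only [map_sub]; abel
    have hdist := hnear t ht'
    rw [hsplit]
    refine (norm_add_le _ _).trans (add_le_add ((A t).le_of_opNorm_le (hA t ht') _) ?_)
    calc _ ≤ L * ‖φ t - ψ t‖ ^ 2 := htaylor t ht' (φ t) (hdist.trans hsmall.le)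
      _ ≤ L * B ^ 2 := by gcongr
  simpa using norm_le_gronwallBound_of_norm_deriv_right_le
    (continuous_iff_continuousAt.2 fun t => (hu t).continuousAt).continuousOn
    (fun t _ => (hu t).hasDerivWithinAt) (by simp [hY0]) hbound T (right_mem_Icc.2 hT)

theorem exists_bounds_fderiv_taylor_near [ProperSpace E] {f : ℝ → E → E}
    (hf : ContDiff ℝ 2 (Function.uncurry f)) {ψ : ℝ → E} {T : ℝ} (hψ : ContinuousOn ψ (Icc 0 T)) :
    ∃ M L : ℝ, 0 ≤ M ∧ 0 ≤ L ∧ (∀ t ∈ Icc 0 T, ‖fderiv ℝ (f t) (ψ t)‖ ≤ M) ∧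
      ∀ t ∈ Icc 0 T, ∀ y, ‖y - ψ t‖ ≤ 1 →
        ‖f t y - f t (ψ t) - fderiv ℝ (f t) (ψ t) (y - ψ t)‖ ≤ L * ‖y - ψ t‖ ^ 2 := by
  set Df : ℝ × E → E →L[ℝ] E := fun p => fderiv ℝ (f p.1) p.2
  have hDf : ContDiff ℝ 1 Df :=
    ContDiff.fderiv (f := fun p : ℝ × E => f p.1) (m := 2)
      (hf.comp (contDiff_fst.fst.prodMk contDiff_snd)) contDiff_snd (by norm_num)
  have hft : ∀ t y, HasFDerivAt (f t) (Df (t, y)) y := fun t y =>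
    ((hf.comp (by fun_prop : ContDiff ℝ 2 fun y : E => (t, y))).differentiable
      (by norm_num) y).hasFDerivAt
  obtain ⟨R, hR⟩ := isCompact_Icc.exists_bound_of_continuousOn hψ
  set K := Icc 0 T ×ˢ closedBall (0 : E) (R + 1)
  have hK : IsCompact K := isCompact_Icc.prod (isCompact_closedBall _ _)
  have htube : ∀ t ∈ Icc 0 T, ∀ y ∈ closedBall (ψ t) 1, (t, y) ∈ K := fun t ht y hy => by
    refine ⟨ht, mem_closedBall_zero_iff.2 ?_⟩
    linarith [norm_le_insert' y (ψ t), mem_closedBall_iff_norm.1 hy, hR t ht]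
  obtain ⟨M, hM⟩ := hK.exists_bound_of_continuousOn hDf.continuous.continuousOn
  obtain ⟨L, hL⟩ := hDf.locallyLipschitz.locallyLipschitzOn.exists_lipschitzOnWith_of_compact hK
  refine ⟨max M 0, L, le_max_right _ _, L.2, fun t ht =>
    (hM _ (htube t ht _ (mem_closedBall_self zero_le_one))).trans (le_max_left _ _),
    fun t ht y hy => ?_⟩
  have hLt : LipschitzOnWith L (fun y => Df (t, y)) (closedBall (ψ t) 1) := by
    have := hL.comp (LipschitzWith.prodMk_left t).lipschitzOnWith (htube t ht)
    rwa [mul_one] at this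
  exact norm_image_sub_sub_fderiv_le_of_lipschitzOnWith (convex_closedBall _ _)
    (fun y _ => (hft t y).hasFDerivWithinAt) hLt (mem_closedBall_iff_norm.2 hy)
    (mem_closedBall_self zero_le_one)

theorem exists_norm_sub_sub_le_sq_of_contDiff [ProperSpace E] {f : ℝ → E → E}
    (hf : ContDiff ℝ 2 (Function.uncurry f)) {ψ : ℝ → E} (hψ : ∀ t, HasDerivAt ψ (f t (ψ t)) t)
    {T : ℝ} (hT : 0 ≤ T) :
    ∃ C δ : ℝ, 0 < δ ∧ ∀ φ Y : ℝ → E, (∀ t, HasDerivAt φ (f t (φ t)) t) →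
      (∀ t, HasDerivAt Y (fderiv ℝ (f t) (ψ t) (Y t)) t) → Y 0 = φ 0 - ψ 0 →
      ‖φ 0 - ψ 0‖ < δ → ‖φ T - ψ T - Y T‖ ≤ C * ‖φ 0 - ψ 0‖ ^ 2 := by
  obtain ⟨M, L, hM, hL, hA, htaylor⟩ := exists_bounds_fderiv_taylor_near hf
    (fun t _ => (hψ t).continuousAt.continuousWithinAt)
  set κ := (M + L * 1) * T
  refine ⟨L * exp κ ^ 2 * gronwallBound 0 M 1 T, exp (-κ), exp_pos _,
    fun φ Y hφ hY hY0 hclose => ?_⟩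
  have hsmall : ‖φ 0 - ψ 0‖ * exp κ < 1 := by
    rwa [exp_neg, ← one_div, lt_div_iff₀ (exp_pos _)] at hclose
  have := norm_sub_sub_le_gronwallBound_of_taylor_near hM hL hT hA htaylor hφ hψ hY hY0 hsmall
  rw [gronwallBound_δ0] at this
  linarith

theorem HasFDerivWithinAt.clm_comp_eq_self_of_norm_sub_le_sq {g : F → E} {D : F →L[ℝ] E}
    {s : Set F} {x : F} (hg : HasFDerivWithinAt g D s x) (hs : UniqueDiffWithinAt ℝ s x)
    {A : E →L[ℝ] E} {C : ℝ}
    (hA : ∀ᶠ y in 𝓝[s] x, ‖(g y - g x) - A (g y - g x)‖ ≤ C * ‖g y - g x‖ ^ 2) :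
    A ∘L D = D := by
  set k := fun y => (g y - g x) - A (g y - g x)
  have hk : HasFDerivWithinAt k (D - A ∘L D) s x :=
    (hg.sub_const (g x)).sub (A.hasFDerivAt.comp_hasFDerivWithinAt x (hg.sub_const (g x)))
  have htends : Tendsto (fun y => g y - g x) (𝓝[s] x) (𝓝 0) := by
    simpa using (hg.continuousWithinAt.tendsto.sub_const (g x))
  have hsq : (fun y => ‖g y - g x‖ ^ 2) =o[𝓝[s] x] fun y => y - x :=
    ((isLittleO_norm_pow_id one_lt_two).comp_tendsto htends).trans_isBigO hg.isBigO_sub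
  have hkO : k =O[𝓝[s] x] fun y => ‖g y - g x‖ ^ 2 :=
    .of_bound C (hA.mono fun y hy => by rwa [norm_pow, norm_norm])
  have hk0 : HasFDerivWithinAt k (0 : F →L[ℝ] E) s x := .of_isLittleO <| by
    simpa only [k, sub_self, map_zero, sub_zero, zero_apply]
      using hkO.trans_isLittleO hsq
  exact (sub_eq_zero.mp (hs.eq hk hk0)).symm

theorem HasFDerivWithinAt.clm_comp_eq_self_of_periodic [ProperSpace E] {f : ℝ → E → E}
    (hf : ContDiff ℝ 2 (Function.uncurry f)) {T : ℝ} (hT : 0 ≤ T) {ξ : F → E} {D : F →L[ℝ] E}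
    {s : Set F} {h : F} (hD : HasFDerivWithinAt ξ D s h) (hs : UniqueDiffWithinAt ℝ s h)
    (hh : h ∈ s) {x : F → ℝ → E} (hx : ∀ h' ∈ s, ∀ t, HasDerivAt (x h') (f t (x h' t)) t)
    (hx0 : ∀ h' ∈ s, x h' 0 = ξ h') (hxT : ∀ h' ∈ s, x h' T = ξ h') {Φ : ℝ → E →L[ℝ] E}
    (hΦ : ∀ w t, HasDerivAt (fun r => Φ r w) (fderiv ℝ (f t) (x h t) (Φ t w)) t) (hΦ0 : Φ 0 = 1) :
    Φ T ∘L D = D := by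
  obtain ⟨C, δ, hδ, hlin⟩ := exists_norm_sub_sub_le_sq_of_contDiff hf (hx h hh) hT
  refine hD.clm_comp_eq_self_of_norm_sub_le_sq hs (C := C) ?_
  filter_upwards [self_mem_nhdsWithin,
    hD.continuousWithinAt.tendsto (ball_mem_nhds (ξ h) hδ)] with h' hh' hclose
  simpa [hx0 h hh, hx0 h' hh', hxT h hh, hxT h' hh'] using
    hlin (x h') (fun r => Φ r (ξ h' - ξ h)) (hx h' hh') (hΦ _)
      (by simp [hx0 h hh, hx0 h' hh', hΦ0])
      (by simpa [hx0 h hh, hx0 h' hh', dist_eq_norm] using hclose)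

theorem ODE_solution_unique_linear {A : ℝ → E →L[ℝ] E} (hA : Continuous A) {y₁ y₂ : ℝ → E}
    (h₁ : ∀ t, HasDerivAt y₁ (A t (y₁ t)) t) (h₂ : ∀ t, HasDerivAt y₂ (A t (y₂ t)) t) {t₀ : ℝ}
    (h : y₁ t₀ = y₂ t₀) : y₁ = y₂ := by
  funext t
  set a := min t t₀ - 1
  set b := max t t₀ + 1
  obtain ⟨K, hK⟩ := isCompact_Icc.exists_bound_of_continuousOn (s := Icc a b) hA.continuousOn
  have hlip : ∀ s ∈ Ioo a b, LipschitzOnWith K.toNNReal (A s) univ := fun s hs =>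
    (ContinuousLinearMap.lipschitzWith_of_opNorm_le
      ((hK s (Ioo_subset_Icc_self hs)).trans (le_coe_toNNReal K))).lipschitzOnWith
  have hcont : ∀ y : ℝ → E, (∀ t, HasDerivAt y (A t (y t)) t) → Continuous y := fun y hy =>
    continuous_iff_continuousAt.2 fun t => (hy t).continuousAt
  have hab : ∀ r, min t t₀ ≤ r → r ≤ max t t₀ → r ∈ Ioo a b := fun r h₁ h₂ =>
    ⟨by linarith, by linarith⟩
  exact ODE_solution_unique_of_mem_Icc hlip (hab t₀ (min_le_right _ _) (le_max_right _ _))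
    (hcont y₁ h₁).continuousOn (fun s _ => h₁ s) (fun _ _ => trivial)
    (hcont y₂ h₂).continuousOn (fun s _ => h₂ s) (fun _ _ => trivial) h
    (Ioo_subset_Icc_self (hab t (min_le_left _ _) (le_max_left _ _)))

theorem ODE_solution_linear_periodic {A : ℝ → E →L[ℝ] E} (hA : Continuous A) {T : ℝ}
    (hAT : Function.Periodic A T) {y : ℝ → E} (hy : ∀ t, HasDerivAt y (A t (y t)) t)
    (hyT : y T = y 0) : Function.Periodic y T := by
  have hshift : ∀ t, HasDerivAt (fun s => y (s + T)) (A t (y (t + T))) t := fun t => by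
    simpa only [hAT t] using (hy (t + T)).comp_add_const t T
  exact congrFun (ODE_solution_unique_linear hA hshift hy (t₀ := 0) (by simpa using hyT))

end

theorem LinearIndependent.of_eval {ι α R M : Type*} [Semiring R] [AddCommMonoid M] [Module R M]
    {y : ι → α → M} (a : α) (h : LinearIndependent R fun i => y i a) : LinearIndependent R y :=
  .of_comp (LinearMap.proj a) h

theorem stmt14_general
    (n k : ℕ)
    (T : ℝ) (hT : 0 < T)
    -- f ∈ C², T-periodic in the first variable
    (f : ℝ → (Fin n → ℝ) → (Fin n → ℝ)) (hf : ContDiff ℝ 2 (Function.uncurry f))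
    (hfper : ∀ t z, f (t + T) z = f t z)
    -- (A10)
    (U : Set (Fin k → ℝ)) (cU : Fin k → ℝ) (rU : ℝ) (hrU : 0 < rU)
    (hU : U = Metric.ball cU rU)
    (ξ : (Fin k → ℝ) → (Fin n → ℝ)) (hξ : ContDiffOn ℝ 1 ξ (closure U))
    (hξrank : ∀ h ∈ closure U, Function.Injective (fderivWithin ℝ ξ (closure U) h))
    -- x(·,z) is the solution of the unperturbed system, T-periodic for z = ξ(h)
    (x : ℝ → (Fin n → ℝ) → (Fin n → ℝ))
    (hx0 : ∀ h ∈ closure U, x 0 (ξ h) = ξ h)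
    (hxsol : ∀ h ∈ closure U, ∀ t : ℝ,
      HasDerivAt (fun s => x s (ξ h)) (f t (x t (ξ h))) t)
    (hxper : ∀ h ∈ closure U, ∀ t : ℝ, x (t + T) (ξ h) = x t (ξ h))
    -- W(·,h) is the normalized fundamental matrix of the linearized system
    (W : ℝ → (Fin k → ℝ) → Matrix (Fin n) (Fin n) ℝ)
    (hW0 : ∀ h ∈ closure U, W 0 h = 1)
    (hWsol : ∀ h ∈ closure U, ∀ (c : Fin n → ℝ) (t : ℝ),
      HasDerivAt (fun s => (W s h).mulVec c)
        (fderiv ℝ (f t) (x t (ξ h)) ((W t h).mulVec c)) t) :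
    ∀ h ∈ closure U,
      -- W(T,h)Dξ(h) = Dξ(h)
      (∀ v : Fin k → ℝ,
        (W T h).mulVec (fderivWithin ℝ ξ (closure U) h v)
          = fderivWithin ℝ ξ (closure U) h v) ∧
      -- t ↦ W(t,h)Dξ(h)c is a T-periodic solution of the linearized system
      (∀ c : Fin k → ℝ,
        (∀ t : ℝ, HasDerivAt
          (fun s => (W s h).mulVec (fderivWithin ℝ ξ (closure U) h c))
          (fderiv ℝ (f t) (x t (ξ h))
            ((W t h).mulVec (fderivWithin ℝ ξ (closure U) h c))) t) ∧
        (∀ t : ℝ, (W (t + T) h).mulVec (fderivWithin ℝ ξ (closure U) h c)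
          = (W t h).mulVec (fderivWithin ℝ ξ (closure U) h c))) ∧
      -- the k solutions t ↦ W(t,h)Dξ(h)eᵢ are linearly independent
      LinearIndependent ℝ (fun i : Fin k => fun t : ℝ =>
        (W t h).mulVec (fderivWithin ℝ ξ (closure U) h (Pi.single i 1))) := by
  intro h hh
  set D := fderivWithin ℝ ξ (closure U) h
  have hD : HasFDerivWithinAt ξ D (closure U) h :=
    (hξ.differentiableOn one_ne_zero h hh).hasFDerivWithinAt
  have hunique : UniqueDiffWithinAt ℝ (closure U) h := uniqueDiffWithinAt_closure.2 <| by
    subst hU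
    exact uniqueDiffWithinAt_convex (convex_ball cU rU)
      (by rwa [isOpen_ball.interior_eq, nonempty_ball]) hh
  have hxT : ∀ h' ∈ closure U, x T (ξ h') = ξ h' := fun h' hh' => by
    simpa [hx0 h' hh'] using hxper h' hh' 0
  set Φ : ℝ → (Fin n → ℝ) →L[ℝ] (Fin n → ℝ) := fun t =>
    LinearMap.toContinuousLinearMap (W t h).mulVecLin
  have hfix : Φ T ∘L D = D := hD.clm_comp_eq_self_of_periodic hf hT.le hunique hh
    (x := fun h' t => x t (ξ h')) hxsol hx0 hxT (hWsol h hh)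
    (by ext1 w; simp [Φ, hW0 h hh])
  have hA : Continuous fun t => fderiv ℝ (f t) (x t (ξ h)) :=
    (hf.fderiv (contDiff_zero.2 (continuous_iff_continuousAt.2 fun t =>
      (hxsol h hh t).continuousAt)) (by norm_num)).continuous
  have hAT : Function.Periodic (fun t => fderiv ℝ (f t) (x t (ξ h))) T := fun t => by
    simp only [hxper h hh t, funext (hfper t)]
  have hfixv : ∀ v, (W T h).mulVec (D v) = D v := fun v => by
    simpa [Φ] using congrArg (· v) hfix
  refine ⟨hfixv, fun c => ⟨hWsol h hh (D c), ODE_solution_linear_periodic hA hAT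
    (hWsol h hh (D c)) (by rw [hfixv, hW0 h hh, Matrix.one_mulVec])⟩, ?_⟩
  refine LinearIndependent.of_eval 0 ?_
  simp only [hW0 h hh, Matrix.one_mulVec]
  exact (Pi.linearIndependent_single_one (Fin k) ℝ).map' D.toLinearMap
    (LinearMap.ker_eq_bot.2 (hξrank h hh))

theorem stmt14
    (n k : ℕ) (hn : 1 ≤ n) (hk1 : 1 ≤ k) (hkn : k ≤ n)
    (T : ℝ) (hT : 0 < T)
    -- f ∈ C², T-periodic in the first variable
    (f : ℝ → (Fin n → ℝ) → (Fin n → ℝ)) (hf : ContDiff ℝ 2 (Function.uncurry f))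
    (hfper : ∀ t z, f (t + T) z = f t z)
    -- (A10)
    (U : Set (Fin k → ℝ)) (cU : Fin k → ℝ) (rU : ℝ) (hrU : 0 < rU)
    (hU : U = Metric.ball cU rU)
    (ξ : (Fin k → ℝ) → (Fin n → ℝ)) (hξ : ContDiffOn ℝ 1 ξ (closure U))
    (hξrank : ∀ h ∈ closure U, Function.Injective (fderivWithin ℝ ξ (closure U) h))
    -- x(·,z) is the solution of the unperturbed system, T-periodic for z = ξ(h)
    (x : ℝ → (Fin n → ℝ) → (Fin n → ℝ))
    (hx0 : ∀ h ∈ closure U, x 0 (ξ h) = ξ h)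
    (hxsol : ∀ h ∈ closure U, ∀ t : ℝ,
      HasDerivAt (fun s => x s (ξ h)) (f t (x t (ξ h))) t)
    (hxper : ∀ h ∈ closure U, ∀ t : ℝ, x (t + T) (ξ h) = x t (ξ h))
    -- W(·,h) is the normalized fundamental matrix of the linearized system
    (W : ℝ → (Fin k → ℝ) → Matrix (Fin n) (Fin n) ℝ)
    (hW0 : ∀ h ∈ closure U, W 0 h = 1)
    (hWsol : ∀ h ∈ closure U, ∀ (c : Fin n → ℝ) (t : ℝ),
      HasDerivAt (fun s => (W s h).mulVec c)
        (fderiv ℝ (f t) (x t (ξ h)) ((W t h).mulVec c)) t) :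
    ∀ h ∈ closure U,
      -- W(T,h)Dξ(h) = Dξ(h)
      (∀ v : Fin k → ℝ,
        (W T h).mulVec (fderivWithin ℝ ξ (closure U) h v)
          = fderivWithin ℝ ξ (closure U) h v) ∧
      -- t ↦ W(t,h)Dξ(h)c is a T-periodic solution of the linearized system
      (∀ c : Fin k → ℝ,
        (∀ t : ℝ, HasDerivAt
          (fun s => (W s h).mulVec (fderivWithin ℝ ξ (closure U) h c))
          (fderiv ℝ (f t) (x t (ξ h))
            ((W t h).mulVec (fderivWithin ℝ ξ (closure U) h c))) t) ∧
        (∀ t : ℝ, (W (t + T) h).mulVec (fderivWithin ℝ ξ (closure U) h c)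
          = (W t h).mulVec (fderivWithin ℝ ξ (closure U) h c))) ∧
      -- the k solutions t ↦ W(t,h)Dξ(h)eᵢ are linearly independent
      LinearIndependent ℝ (fun i : Fin k => fun t : ℝ =>
        (W t h).mulVec (fderivWithin ℝ ξ (closure U) h (Pi.single i 1))) :=
  stmt14_general n k T hT f hf hfper U cU rU hrU hU ξ hξ hξrank x hx0 hxsol hxper W hW0 hWsol
end

section
/- Suppose (A13) holds at z₀: there exist δ* > 0 and functions r, m : (0,δ*] → [0,∞) with r(δ) → 0 and m(δ) → 0 as δ → 0⁺, and for each δ ∈ (0,δ*] a Lebesgue measurable set M_δ ⊂ [0,T] with Lebesgue measure at most m(δ), such that for every t ∈ [0,T] \ M_δ, every z ∈ B_{2δ}(z₀) and every ε ∈ [0,δ], the map z ↦ g(t,z,ε) is differentiable at z with ‖D_zg(t,z,ε) − D_zg(t,z₀,0)‖ ≤ r(δ). Then (A9) holds at z₀: there exist δ** ∈ (0,δ*] and r' : (0,δ**] → [0,∞) with r'(δ) → 0 as δ → 0⁺, such that for each δ ∈ (0,δ**] there is a Lebesgue measurable set M'_δ ⊂ [0,T] with Lebesgue measure at most m(δ)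 and ‖g(t, z₁+ζ, ε) − g(t, z₁, 0) − g(t, z₂+ζ, ε) + g(t, z₂, 0)‖ ≤ r'(δ)‖z₁ − z₂‖ for all t ∈ [0,T] \ M'_δ, z₁, z₂ ∈ B_δ(z₀), ε ∈ [0,δ] and ζ ∈ B_δ(0). -/
/-!
For fixed `t`, `ε` and `ζ`, the map `w ↦ g(t, w + ζ, ε) - g(t, w, 0)` has derivative
`D_z g(t, w + ζ, ε) - D_z g(t, w, 0)` at every `w ∈ B_δ(z₀)`. Both `w + ζ` and `w` lie in
`B_{2δ}(z₀)`, so off `M_δ` both derivatives are within `r(δ)` of `D_z g(t, z₀, 0)`, and the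
mean value inequality on the convex ball `B_δ(z₀)` gives (A9) with `δ** = δ*`, `M'_δ = M_δ` and
`r' = 2 r`.
-/

open scoped Topology

section ShiftedDifference

variable {E F : Type*} [NormedAddCommGroup E] [NormedSpace ℝ E]
  [NormedAddCommGroup F] [NormedSpace ℝ F]

theorem Convex.norm_shift_sub_sub_le {s : Set E} (hs : Convex ℝ s) {f f₀ : E → F} {ζ : E}
    {D : E →L[ℝ] F} {C : ℝ}
    (hf : ∀ x ∈ s, DifferentiableAt ℝ f (x + ζ) ∧ ‖fderiv ℝ f (x + ζ) - D‖ ≤ C)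
    (hf₀ : ∀ x ∈ s, DifferentiableAt ℝ f₀ x ∧ ‖fderiv ℝ f₀ x - D‖ ≤ C)
    {z₁ z₂ : E} (hz₁ : z₁ ∈ s) (hz₂ : z₂ ∈ s) :
    ‖f (z₁ + ζ) - f₀ z₁ - f (z₂ + ζ) + f₀ z₂‖ ≤ 2 * C * ‖z₁ - z₂‖ := by
  have hderiv : ∀ x ∈ s, HasFDerivWithinAt (fun w => f (w + ζ) - f₀ w)
      (fderiv ℝ f (x + ζ) - fderiv ℝ f₀ x) s x := fun x hx =>
    (((hasFDerivAt_comp_add_right ζ).2 (hf x hx).1.hasFDerivAt).sub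
      (hf₀ x hx).1.hasFDerivAt).hasFDerivWithinAt
  have hbound : ∀ x ∈ s, ‖fderiv ℝ f (x + ζ) - fderiv ℝ f₀ x‖ ≤ 2 * C := fun x hx =>
    calc ‖fderiv ℝ f (x + ζ) - fderiv ℝ f₀ x‖
        ≤ ‖fderiv ℝ f (x + ζ) - D‖ + ‖D - fderiv ℝ f₀ x‖ := norm_sub_le_norm_sub_add_norm_sub ..
      _ ≤ C + C := by rw [norm_sub_rev D]; exact add_le_add (hf x hx).2 (hf₀ x hx).2
      _ = 2 * C := by ring
  simpa only [sub_sub_sub_eq, sub_add] using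
    hs.norm_image_sub_le_of_norm_hasFDerivWithin_le hderiv hbound hz₂ hz₁

end ShiftedDifference

theorem Metric.add_mem_ball_two_mul {E : Type*} [SeminormedAddCommGroup E] {x z₀ ζ : E} {δ : ℝ}
    (hx : x ∈ Metric.ball z₀ δ) (hζ : ζ ∈ Metric.ball (0 : E) δ) :
    x + ζ ∈ Metric.ball z₀ (2 * δ) := by
  rw [mem_ball_zero_iff] at hζ
  rw [mem_ball_iff_norm] at hx ⊢
  calc ‖x + ζ - z₀‖ = ‖(x - z₀) + ζ‖ := by rw [sub_add_eq_add_sub]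
    _ ≤ ‖x - z₀‖ + ‖ζ‖ := norm_add_le _ _
    _ < 2 * δ := by linarith

theorem stmt15_general
    (n : ℕ) (T : ℝ)
    (g : ℝ → (Fin n → ℝ) → ℝ → (Fin n → ℝ))
    (z₀ : Fin n → ℝ)
    -- (A13) at z₀
    (δs : ℝ) (hδs : 0 < δs)
    (r m : ℝ → ℝ)
    (hrm : ∀ δ ∈ Set.Ioc (0 : ℝ) δs, 0 ≤ r δ ∧ 0 ≤ m δ)
    (hrlim : Filter.Tendsto r (𝓝[>] (0 : ℝ)) (nhds 0))
    (Mδ : ℝ → Set ℝ)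
    (hMδ : ∀ δ ∈ Set.Ioc (0 : ℝ) δs, MeasurableSet (Mδ δ) ∧ Mδ δ ⊆ Set.Icc 0 T ∧
      MeasureTheory.volume (Mδ δ) ≤ ENNReal.ofReal (m δ))
    (hA13 : ∀ δ ∈ Set.Ioc (0 : ℝ) δs, ∀ t ∈ Set.Icc (0 : ℝ) T \ Mδ δ,
      ∀ z ∈ Metric.ball z₀ (2 * δ), ∀ e ∈ Set.Icc (0 : ℝ) δ,
        DifferentiableAt ℝ (fun w => g t w e) z ∧
        ‖fderiv ℝ (fun w => g t w e) z - fderiv ℝ (fun w => g t w 0) z₀‖ ≤ r δ) :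
    -- (A9) at z₀
    ∃ δss : ℝ, (0 < δss ∧ δss ≤ δs) ∧ ∃ r' : ℝ → ℝ,
      (∀ δ ∈ Set.Ioc (0 : ℝ) δss, 0 ≤ r' δ) ∧
      Filter.Tendsto r' (𝓝[>] (0 : ℝ)) (nhds 0) ∧
      ∀ δ ∈ Set.Ioc (0 : ℝ) δss, ∃ M' : Set ℝ,
        MeasurableSet M' ∧ M' ⊆ Set.Icc 0 T ∧
        MeasureTheory.volume M' ≤ ENNReal.ofReal (m δ) ∧
        ∀ t ∈ Set.Icc (0 : ℝ) T \ M',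
          ∀ z₁ ∈ Metric.ball z₀ δ, ∀ z₂ ∈ Metric.ball z₀ δ,
          ∀ e ∈ Set.Icc (0 : ℝ) δ, ∀ ζ ∈ Metric.ball (0 : Fin n → ℝ) δ,
            ‖g t (z₁ + ζ) e - g t z₁ 0 - g t (z₂ + ζ) e + g t z₂ 0‖
              ≤ r' δ * ‖z₁ - z₂‖ := by
  refine ⟨δs, ⟨hδs, le_rfl⟩, fun δ => 2 * r δ, fun δ hδ => by linarith [(hrm δ hδ).1],
    by simpa using hrlim.const_mul 2, fun δ hδ => ?_⟩
  obtain ⟨hMmeas, hMsub, hMvol⟩ := hMδ δ hδ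
  refine ⟨Mδ δ, hMmeas, hMsub, hMvol, fun t ht z₁ hz₁ z₂ hz₂ e he ζ hζ => ?_⟩
  have hball : Metric.ball z₀ δ ⊆ Metric.ball z₀ (2 * δ) :=
    Metric.ball_subset_ball (by linarith [hδ.1])
  exact (convex_ball z₀ δ).norm_shift_sub_sub_le
    (fun x hx => hA13 δ hδ t ht (x + ζ) (Metric.add_mem_ball_two_mul hx hζ) e he)
    (fun x hx => hA13 δ hδ t ht x (hball hx) 0 ⟨le_rfl, hδ.1.le⟩) hz₁ hz₂

theorem stmt15
    (n : ℕ) (hn : 1 ≤ n) (T : ℝ) (hT : 0 < T)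
    -- g continuous on ℝ × ℝⁿ × [0,1], locally uniformly Lipschitz in its second variable
    (g : ℝ → (Fin n → ℝ) → ℝ → (Fin n → ℝ))
    (hgcont : ContinuousOn (fun p : ℝ × (Fin n → ℝ) × ℝ => g p.1 p.2.1 p.2.2)
      (Set.univ ×ˢ Set.univ ×ˢ Set.Icc 0 1))
    (hglip : ∀ K' : Set (ℝ × (Fin n → ℝ) × ℝ), IsCompact K' →
      K' ⊆ Set.univ ×ˢ Set.univ ×ˢ Set.Icc 0 1 →
      ∃ L > 0, ∀ t : ℝ, ∀ z₁ z₂ : Fin n → ℝ, ∀ e : ℝ,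
        (t, z₁, e) ∈ K' → (t, z₂, e) ∈ K' → ‖g t z₁ e - g t z₂ e‖ ≤ L * ‖z₁ - z₂‖)
    (z₀ : Fin n → ℝ)
    -- (A13) at z₀
    (δs : ℝ) (hδs : 0 < δs)
    (r m : ℝ → ℝ)
    (hrm : ∀ δ ∈ Set.Ioc (0 : ℝ) δs, 0 ≤ r δ ∧ 0 ≤ m δ)
    (hrlim : Filter.Tendsto r (𝓝[>] (0 : ℝ)) (nhds 0))
    (hmlim : Filter.Tendsto m (𝓝[>] (0 : ℝ)) (nhds 0))
    (Mδ : ℝ → Set ℝ)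
    (hMδ : ∀ δ ∈ Set.Ioc (0 : ℝ) δs, MeasurableSet (Mδ δ) ∧ Mδ δ ⊆ Set.Icc 0 T ∧
      MeasureTheory.volume (Mδ δ) ≤ ENNReal.ofReal (m δ))
    (hA13 : ∀ δ ∈ Set.Ioc (0 : ℝ) δs, ∀ t ∈ Set.Icc (0 : ℝ) T \ Mδ δ,
      ∀ z ∈ Metric.ball z₀ (2 * δ), ∀ e ∈ Set.Icc (0 : ℝ) δ,
        DifferentiableAt ℝ (fun w => g t w e) z ∧
        ‖fderiv ℝ (fun w => g t w e) z - fderiv ℝ (fun w => g t w 0) z₀‖ ≤ r δ) :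
    -- (A9) at z₀
    ∃ δss : ℝ, (0 < δss ∧ δss ≤ δs) ∧ ∃ r' : ℝ → ℝ,
      (∀ δ ∈ Set.Ioc (0 : ℝ) δss, 0 ≤ r' δ) ∧
      Filter.Tendsto r' (𝓝[>] (0 : ℝ)) (nhds 0) ∧
      ∀ δ ∈ Set.Ioc (0 : ℝ) δss, ∃ M' : Set ℝ,
        MeasurableSet M' ∧ M' ⊆ Set.Icc 0 T ∧
        MeasureTheory.volume M' ≤ ENNReal.ofReal (m δ) ∧
        ∀ t ∈ Set.Icc (0 : ℝ) T \ M',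
          ∀ z₁ ∈ Metric.ball z₀ δ, ∀ z₂ ∈ Metric.ball z₀ δ,
          ∀ e ∈ Set.Icc (0 : ℝ) δ, ∀ ζ ∈ Metric.ball (0 : Fin n → ℝ) δ,
            ‖g t (z₁ + ζ) e - g t z₁ 0 - g t (z₂ + ζ) e + g t z₂ 0‖
              ≤ r' δ * ‖z₁ - z₂‖ :=
  stmt15_general n T g z₀ δs hδs r m hrm hrlim Mδ hMδ hA13
end
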